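/- Let ρ and σ be two n-qubit quantum states. Then max{trace ρ², trace σ²} · TV(p_ρ, p_σ) ≤ 2·‖ρ − σ‖₁, where TV(p, q) := (1/2)·∑_{a ∈ (Fin n → Fin 4)} |p(a) − q(a)| is the total variation distance. -/

import Mathlib

open Matrix Kronecker
open scoped ComplexOrder

noncomputable def pauli1 : Fin 4 → Matrix (Fin 2) (Fin 2) ℂ
  | 0 => !![1, 0; 0, 1]
  | 1 => !![0, 1; 1, 0]
  | 2 => !![0, -Complex.I; Complex.I, 0]
  | 3 => !![1, 0; 0, -1]

noncomputable def PauliOp {n : ℕ} (a : Fin n → Fin 4) :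
    Matrix (Fin n → Fin 2) (Fin n → Fin 2) ℂ :=
  Matrix.of fun z z' => ∏ i, pauli1 (a i) (z i) (z' i)

/-- The trace norm of a matrix: the trace of the positive semidefinite square root of `Aᴴ * A`. -/
noncomputable def traceNorm {m : Type*} [Fintype m] [DecidableEq m]
    (A : Matrix m m ℂ) : ℝ :=
  (((Matrix.posSemidef_conjTranspose_mul_self A).isHermitian.eigenvectorUnitary : Matrix m m ℂ) *
    Matrix.diagonal (((↑) : ℝ → ℂ) ∘ Real.sqrt ∘ (Matrix.posSemidef_conjTranspose_mul_self A).isHermitian.eigenvalues) *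
    (star (Matrix.posSemidef_conjTranspose_mul_self A).isHermitian.eigenvectorUnitary : Matrix m m ℂ)).trace.re

/-- A quantum state: positive semidefinite with unit trace. -/
structure IsState {m : Type*} [Fintype m] (ρ : Matrix m m ℂ) : Prop where
  posSemidef : ρ.PosSemidef
  trace_one : ρ.trace = 1

/-- Pauli expectation value `⟨P_a⟩_ρ`. -/
noncomputable def pExp {n : ℕ} (ρ : Matrix (Fin n → Fin 2) (Fin n → Fin 2) ℂ)
    (a : Fin n → Fin 4) : ℝ := ((PauliOp a * ρ).trace).re

/-- The purity `tr ρ²`. -/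
noncomputable def purity {m : Type*} [Fintype m] (ρ : Matrix m m ℂ) : ℝ :=
  ((ρ * ρ).trace).re

/-- The Pauli distribution `p_ρ`. -/
noncomputable def pDist {n : ℕ} (ρ : Matrix (Fin n → Fin 2) (Fin n → Fin 2) ℂ)
    (a : Fin n → Fin 4) : ℝ := (pExp ρ a) ^ 2 / (2 ^ n * purity ρ)

/-- The cumulative distribution function `F_ρ`. -/
noncomputable def cdf {n : ℕ} (ρ : Matrix (Fin n → Fin 2) (Fin n → Fin 2) ℂ)
    (ε : ℝ) : ℝ := ∑ a : Fin n → Fin 4, if (pExp ρ a) ^ 2 ≤ ε then pDist ρ a else 0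

/-- The maximally entangled state `|Φ₀⟩`. -/
noncomputable def Phi0 (n : ℕ) : (Fin n → Fin 2) × (Fin n → Fin 2) → ℂ :=
  fun p => if p.1 = p.2 then (↑(Real.sqrt (2 ^ n)))⁻¹ else 0

/-- The Bell state `|Φ_a⟩ = (1 ⊗ P_a)|Φ₀⟩`. -/
noncomputable def BellVec {n : ℕ} (a : Fin n → Fin 4) :
    (Fin n → Fin 2) × (Fin n → Fin 2) → ℂ :=
  ((1 : Matrix (Fin n → Fin 2) (Fin n → Fin 2) ℂ) ⊗ₖ PauliOp a).mulVec (Phi0 n)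

/-- The Bell distribution `q_ρ(a) = ⟨Φ_a| ρ ⊗ ρ |Φ_a⟩`. -/
noncomputable def qDist {n : ℕ} (ρ : Matrix (Fin n → Fin 2) (Fin n → Fin 2) ℂ)
    (a : Fin n → Fin 4) : ℝ :=
  (star (BellVec a) ⬝ᵥ ((ρ ⊗ₖ ρ).mulVec (BellVec a))).re

/-- The W state. -/
noncomputable def Wstate (n : ℕ) : (Fin n → Fin 2) → ℂ :=
  fun z => if (∑ i, (z i : ℕ)) = 1 then (↑(Real.sqrt n))⁻¹ else 0

/-- The W state projector `|W_n⟩⟨W_n|`. -/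
noncomputable def Wproj (n : ℕ) : Matrix (Fin n → Fin 2) (Fin n → Fin 2) ℂ :=
  Matrix.vecMulVec (Wstate n) (star (Wstate n))

/-!
The Pauli operators form an orthogonal basis, `∑ₐ tr(P_a A) tr(P_a B) = 2ⁿ tr(AB)`, so `p_ρ` is the
normalisation of the weights `⟨P_a⟩_ρ²`, whose total mass is `2ⁿ tr ρ²`. For nonnegative vectors
`u, v`, normalisation satisfies `max(Σu, Σv) · ‖u/Σu − v/Σv‖₁ ≤ 2 ‖u − v‖₁`.
By Cauchy–Schwarz and orthogonality again, `∑ₐ |⟨P_a⟩_ρ² − ⟨P_a⟩_σ²| ≤ 2ⁿ ‖ρ − σ‖₂ ‖ρ + σ‖₂` for the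
Hilbert–Schmidt norm `‖X‖₂² = tr X²`, and `‖X‖₂ ≤ ‖X‖₁` with `‖ρ + σ‖₁ = tr(ρ + σ) = 2`.
-/

section Spectral

variable {m : Type*} [Fintype m] {A : Matrix m m ℂ}

lemma Matrix.IsHermitian.im_trace_mul {B : Matrix m m ℂ} (hA : A.IsHermitian)
    (hB : B.IsHermitian) : (A * B).trace.im = 0 := by
  have hstar : star (A * B).trace = (A * B).trace := by
    rw [← trace_conjTranspose, conjTranspose_mul, hA.eq, hB.eq, trace_mul_comm]
  have him := congrArg Complex.im hstar
  simp only [Complex.star_def, Complex.conj_im] at him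
  linarith

lemma purity_pos (hA : A.IsHermitian) (hA0 : A ≠ 0) : 0 < purity A := by
  have hpos : 0 < (Aᴴ * A).trace :=
    (posSemidef_conjTranspose_mul_self A).trace_nonneg.lt_of_ne'
      (mt trace_conjTranspose_mul_self_eq_zero_iff.1 hA0)
  rw [hA.eq] at hpos
  exact (Complex.pos_iff.1 hpos).1

variable [DecidableEq m]

lemma Matrix.IsHermitian.trace_cfc (hA : A.IsHermitian) (f : ℝ → ℝ) :
    (cfc f A).trace = ∑ i, (f (hA.eigenvalues i) : ℂ) := by
  rw [hA.cfc_eq, IsHermitian.cfc, Unitary.conjStarAlgAut_apply, trace_mul_comm, ← Matrix.mul_assoc,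
    UnitaryGroup.star_mul_self, Matrix.one_mul, trace_diagonal]
  rfl

lemma purity_eq_sum_sq_eigenvalues (hA : A.IsHermitian) :
    purity A = ∑ i, hA.eigenvalues i ^ 2 := by
  rw [purity, ← sq, ← cfc_pow_id (R := ℝ) A 2 hA.isSelfAdjoint, hA.trace_cfc, Complex.re_sum]
  simp only [Complex.ofReal_re]

lemma traceNorm_eq_re_trace_cfc_sqrt (A : Matrix m m ℂ) :
    traceNorm A = (cfc Real.sqrt (Aᴴ * A)).trace.re := by
  rw [(posSemidef_conjTranspose_mul_self A).isHermitian.cfc_eq, IsHermitian.cfc,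
    Unitary.conjStarAlgAut_apply]
  rfl

lemma traceNorm_eq_sum_abs_eigenvalues (hA : A.IsHermitian) :
    traceNorm A = ∑ i, |hA.eigenvalues i| := by
  rw [traceNorm_eq_re_trace_cfc_sqrt, hA.eq, ← sq,
    ← cfc_comp_pow (R := ℝ) Real.sqrt 2 A (ha := hA.isSelfAdjoint)]
  simp only [Real.sqrt_sq_eq_abs]
  rw [hA.trace_cfc, Complex.re_sum]
  simp only [Complex.ofReal_re]

lemma purity_le_traceNorm_sq (hA : A.IsHermitian) : purity A ≤ traceNorm A ^ 2 := by
  rw [purity_eq_sum_sq_eigenvalues hA, traceNorm_eq_sum_abs_eigenvalues hA]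
  simp only [← sq_abs (hA.eigenvalues _)]
  exact Finset.sum_sq_le_sq_sum_of_nonneg fun i _ => abs_nonneg _

lemma Matrix.PosSemidef.traceNorm_eq_re_trace (hA : A.PosSemidef) : traceNorm A = A.trace.re := by
  rw [traceNorm_eq_sum_abs_eigenvalues hA.isHermitian, hA.isHermitian.trace_eq_sum_eigenvalues,
    Complex.re_sum]
  simp only [abs_of_nonneg (hA.eigenvalues_nonneg _)]
  rfl

lemma traceNorm_nonneg (A : Matrix m m ℂ) : 0 ≤ traceNorm A := by
  rw [traceNorm_eq_re_trace_cfc_sqrt, (posSemidef_conjTranspose_mul_self A).isHermitian.trace_cfc,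
    Complex.re_sum]
  exact Finset.sum_nonneg fun i _ => Real.sqrt_nonneg _

end Spectral

lemma IsState.purity_pos {m : Type*} [Fintype m] {ρ : Matrix m m ℂ} (hρ : IsState ρ) :
    0 < purity ρ :=
  _root_.purity_pos hρ.posSemidef.isHermitian fun h => by simpa [h] using hρ.trace_one

lemma pauli1_isHermitian (c : Fin 4) : (pauli1 c).IsHermitian := by
  fin_cases c <;>
    · ext i j
      fin_cases i <;> fin_cases j <;> simp [pauli1, conjTranspose_apply]

lemma pauliOp_isHermitian {n : ℕ} (a : Fin n → Fin 4) : (PauliOp a).IsHermitian := by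
  ext z z'
  simp only [PauliOp, conjTranspose_apply, of_apply, star_prod]
  exact Finset.prod_congr rfl fun i _ => congrFun₂ (pauli1_isHermitian (a i)) (z i) (z' i)

lemma sum_pauli1_mul_pauli1 (i j k l : Fin 2) :
    ∑ c : Fin 4, pauli1 c i j * pauli1 c k l = if i = l ∧ j = k then 2 else 0 := by
  fin_cases i <;> fin_cases j <;> fin_cases k <;> fin_cases l <;>
    norm_num [pauli1, Fin.sum_univ_four]

section Pauli

variable {n : ℕ}

lemma sum_pauliOp_mul_pauliOp (z z' w w' : Fin n → Fin 2) :
    ∑ a : Fin n → Fin 4, PauliOp a z z' * PauliOp a w w'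
      = if z = w' ∧ z' = w then 2 ^ n else 0 := by
  simp only [PauliOp, of_apply, ← Finset.prod_mul_distrib]
  rw [← Fintype.prod_sum (fun i c => pauli1 c (z i) (z' i) * pauli1 c (w i) (w' i))]
  simp only [sum_pauli1_mul_pauli1, Fintype.prod_ite_zero, Finset.prod_const, Finset.card_univ,
    Fintype.card_fin, funext_iff, forall_and]

lemma sum_trace_pauliOp_mul_mul (A B : Matrix (Fin n → Fin 2) (Fin n → Fin 2) ℂ) :
    ∑ a : Fin n → Fin 4, (PauliOp a * A).trace * (PauliOp a * B).trace
      = 2 ^ n * (A * B).trace := by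
  simp only [trace, diag, mul_apply, Finset.sum_mul_sum]
  calc _ = ∑ z : Fin n → Fin 2, ∑ w : Fin n → Fin 2, ∑ z' : Fin n → Fin 2, ∑ w' : Fin n → Fin 2,
        (∑ a : Fin n → Fin 4, PauliOp a z z' * PauliOp a w w') * (A z' z * B w' w) := by
        simp only [Finset.sum_mul]
        rw [Finset.sum_comm]; apply Finset.sum_congr rfl; intro z _
        rw [Finset.sum_comm]; apply Finset.sum_congr rfl; intro w _
        rw [Finset.sum_comm]; apply Finset.sum_congr rfl; intro z' _
        rw [Finset.sum_comm]; apply Finset.sum_congr rfl; intro w' _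
        apply Finset.sum_congr rfl; intro a _
        ring
    _ = _ := by
        simp only [sum_pauliOp_mul_pauliOp, ite_and, ite_mul, zero_mul, Finset.sum_ite_eq,
          Finset.mem_univ, ↓reduceIte, Finset.sum_ite_eq', Finset.mul_sum]
        exact Finset.sum_comm

lemma pExp_add (A B : Matrix (Fin n → Fin 2) (Fin n → Fin 2) ℂ) (a : Fin n → Fin 4) :
    pExp (A + B) a = pExp A a + pExp B a := by
  simp [pExp, Matrix.mul_add]

lemma pExp_sub (A B : Matrix (Fin n → Fin 2) (Fin n → Fin 2) ℂ) (a : Fin n → Fin 4) :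
    pExp (A - B) a = pExp A a - pExp B a := by
  simp [pExp, Matrix.mul_sub]

lemma sum_pExp_sq {A : Matrix (Fin n → Fin 2) (Fin n → Fin 2) ℂ} (hA : A.IsHermitian) :
    ∑ a : Fin n → Fin 4, pExp A a ^ 2 = 2 ^ n * purity A := by
  have h := congrArg Complex.re (sum_trace_pauliOp_mul_mul A A)
  rw [show (2 : ℂ) ^ n = ((2 ^ n : ℝ) : ℂ) by push_cast; rfl, Complex.re_ofReal_mul] at h
  simp only [Complex.re_sum, Complex.mul_re, (pauliOp_isHermitian _).im_trace_mul hA, mul_zero,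
    sub_zero] at h
  simpa only [pExp, purity, sq] using h

lemma sum_abs_pExp_sq_sub_le {A B : Matrix (Fin n → Fin 2) (Fin n → Fin 2) ℂ}
    (hA : A.IsHermitian) (hB : B.IsHermitian) :
    ∑ a : Fin n → Fin 4, |pExp A a ^ 2 - pExp B a ^ 2|
      ≤ 2 ^ n * (traceNorm (A - B) * traceNorm (A + B)) := by
  have hsub := sum_pExp_sq (hA.sub hB)
  have hadd := sum_pExp_sq (hA.add hB)
  simp only [pExp_sub, pExp_add] at hsub hadd
  calc ∑ a, |pExp A a ^ 2 - pExp B a ^ 2|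
      = ∑ a, |pExp A a - pExp B a| * |pExp A a + pExp B a| := by
        refine Finset.sum_congr rfl fun a _ => ?_
        rw [← abs_mul, sq_sub_sq, mul_comm]
    _ ≤ √(∑ a, |pExp A a - pExp B a| ^ 2) * √(∑ a, |pExp A a + pExp B a| ^ 2) :=
        Real.sum_mul_le_sqrt_mul_sqrt _ _ _
    _ = √(2 ^ n * purity (A - B)) * √(2 ^ n * purity (A + B)) := by
        simp only [sq_abs, hsub, hadd]
    _ ≤ √(2 ^ n * traceNorm (A - B) ^ 2) * √(2 ^ n * traceNorm (A + B) ^ 2) := by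
        gcongr
        · exact purity_le_traceNorm_sq (hA.sub hB)
        · exact purity_le_traceNorm_sq (hA.add hB)
    _ = 2 ^ n * (traceNorm (A - B) * traceNorm (A + B)) := by
        have hT := mul_nonneg (traceNorm_nonneg (A - B)) (traceNorm_nonneg (A + B))
        generalize traceNorm (A - B) = s, traceNorm (A + B) = t at hT ⊢
        rw [← Real.sqrt_mul (by positivity),
          ← Real.sqrt_sq (by positivity : (0 : ℝ) ≤ 2 ^ n * (s * t))]
        ring_nf

end Pauli

section Normalization

variable {ι : Type*} [Fintype ι] {u v : ι → ℝ}

lemma mul_sum_abs_div_sub_div_le (hv : 0 ≤ v) (hV : 0 < ∑ i, v i)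
    (hVU : ∑ i, v i ≤ ∑ i, u i) :
    (∑ i, u i) * ∑ i, |u i / ∑ j, u j - v i / ∑ j, v j| ≤ 2 * ∑ i, |u i - v i| := by
  set U := ∑ i, u i
  set V := ∑ i, v i
  have hU : 0 < U := hV.trans_le hVU
  have hpoint : ∀ i, U * |u i / U - v i / V| ≤ |u i - v i| + (U / V - 1) * v i := fun i => by
    have hc : 0 ≤ U / V - 1 := sub_nonneg.2 ((one_le_div hV).2 hVU)
    calc U * |u i / U - v i / V| = |(u i - v i) - (U / V - 1) * v i| := by
          rw [← abs_of_pos hU, ← abs_mul, abs_of_pos hU]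
          congr 1
          field_simp
          ring
      _ ≤ |u i - v i| + (U / V - 1) * v i := by
          simpa [abs_of_nonneg (mul_nonneg hc (hv i))] using
            abs_sub (u i - v i) ((U / V - 1) * v i)
  have hdiff : U - V ≤ ∑ i, |u i - v i| := by
    rw [← Finset.sum_sub_distrib]
    exact Finset.sum_le_sum fun i _ => le_abs_self _
  calc U * ∑ i, |u i / U - v i / V| ≤ ∑ i, (|u i - v i| + (U / V - 1) * v i) := by
        rw [Finset.mul_sum]
        exact Finset.sum_le_sum fun i _ => hpoint i
    _ = ∑ i, |u i - v i| + (U - V) := by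
        rw [Finset.sum_add_distrib, ← Finset.mul_sum, sub_one_mul, div_mul_cancel₀ U hV.ne']
    _ ≤ 2 * ∑ i, |u i - v i| := by linarith

lemma max_mul_sum_abs_div_sub_div_le (hu : 0 ≤ u) (hv : 0 ≤ v) (hU : 0 < ∑ i, u i)
    (hV : 0 < ∑ i, v i) :
    max (∑ i, u i) (∑ i, v i) * ∑ i, |u i / ∑ j, u j - v i / ∑ j, v j|
      ≤ 2 * ∑ i, |u i - v i| := by
  rcases le_total (∑ i, v i) (∑ i, u i) with h | h
  · rw [max_eq_left h]
    exact mul_sum_abs_div_sub_div_le hv hV h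
  · rw [max_eq_right h]
    simp only [abs_sub_comm (u _ / _), abs_sub_comm (u _)]
    exact mul_sum_abs_div_sub_div_le hu hU h

end Normalization

theorem stmt_4_general {n : ℕ}
    (ρ σ : Matrix (Fin n → Fin 2) (Fin n → Fin 2) ℂ)
    (hρ : IsState ρ) (hσ : IsState σ) :
    max (purity ρ) (purity σ) *
      ((1 / 2) * ∑ a : Fin n → Fin 4, |pDist ρ a - pDist σ a|)
      ≤ 2 * traceNorm (ρ - σ) := by
  have hsumρ := sum_pExp_sq hρ.posSemidef.isHermitian
  have hsumσ := sum_pExp_sq hσ.posSemidef.isHermitian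
  have hnormalize := max_mul_sum_abs_div_sub_div_le (fun a => sq_nonneg (pExp ρ a))
    (fun a => sq_nonneg (pExp σ a)) (hsumρ ▸ mul_pos (by positivity) hρ.purity_pos)
    (hsumσ ▸ mul_pos (by positivity) hσ.purity_pos)
  have htraceNorm_add : traceNorm (ρ + σ) = 2 := by
    rw [(hρ.posSemidef.add hσ.posSemidef).traceNorm_eq_re_trace, trace_add, hρ.trace_one,
      hσ.trace_one]
    norm_num
  have hbound := sum_abs_pExp_sq_sub_le hρ.posSemidef.isHermitian hσ.posSemidef.isHermitian
  rw [htraceNorm_add] at hbound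
  simp only [hsumρ, hsumσ,
    ← mul_max_of_nonneg _ _ (by positivity : (0 : ℝ) ≤ 2 ^ n)] at hnormalize
  refine le_of_mul_le_mul_left ?_ (by positivity : (0 : ℝ) < 2 ^ n)
  unfold pDist
  linarith

/-- `max{tr ρ², tr σ²} · TV(p_ρ, p_σ) ≤ 2‖ρ − σ‖₁`. -/
theorem stmt_4 {n : ℕ} (hn : 1 ≤ n)
    (ρ σ : Matrix (Fin n → Fin 2) (Fin n → Fin 2) ℂ)
    (hρ : IsState ρ) (hσ : IsState σ) :
    max (purity ρ) (purity σ) *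
      ((1 / 2) * ∑ a : Fin n → Fin 4, |pDist ρ a - pDist σ a|)
      ≤ 2 * traceNorm (ρ - σ) :=
  stmt_4_general ρ σ hρ hσ
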